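/- Let G = (V,E) be a finite undirected multigraph and A, B ⊆ V². If two fourientations φ and φ' of G are cycle (resp. cocycle, cycle-cocycle) equivalent, then φ can be obtained from φ' by repeatedly reversing directed cycles (resp. directed (A,B)-cocycles, directed cycles or (A,B)-cocycles) none of which contains any 1-way edge that has the same orientation in φ and in φ'. -/

import Mathlib

namespace SubgraphsVsOrientations

/-- The four possible configurations of an edge in a fourientation:
`zero` = 0-way, `forward`/`backward` = the two 1-way configurations (relative to
a reference direction of the edge), `two` = 2-way. -/
inductive Four : Type
  | zero | forward | backward | two
deriving DecidableEq

instance : Fintype Four :=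
  ⟨{Four.zero, Four.forward, Four.backward, Four.two}, fun x => by cases x <;> simp⟩

variable {V E : Type*}

/-- Whether configuration `c` allows traversal of the edge in direction `b`
(`b = true` means from `src` to `tgt`). -/
def allows : Four → Bool → Prop
  | Four.zero, _ => False
  | Four.forward, b => b = true
  | Four.backward, b => b = false
  | Four.two, _ => True

/-- An edge configuration is solid if it is 0-way or 2-way. -/
def IsSolid (c : Four) : Prop := c = Four.zero ∨ c = Four.two

/-- A configuration is 1-way if it is `forward` or `backward`. -/
def IsOneWay (c : Four) : Prop := c = Four.forward ∨ c = Four.backward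

/-- Reversing a configuration: swaps the two 1-way configurations,
fixes 0-way and 2-way. -/
def flipFour : Four → Four
  | Four.forward => Four.backward
  | Four.backward => Four.forward
  | c => c

/-- The 1-way configuration corresponding to direction `b`. -/
def oneWayFour (b : Bool) : Four := if b then Four.forward else Four.backward

/-- Tail of the arc `(e, b)` (the edge `e` traversed in direction `b`). -/
def arcTail (src tgt : E → V) (a : E × Bool) : V := if a.2 then src a.1 else tgt a.1

/-- Head of the arc `(e, b)`. -/
def arcHead (src tgt : E → V) (a : E × Bool) : V := if a.2 then tgt a.1 else src a.1

/-- One-step relation of the digraph `G⃗(A,B;φ)`: there is an arc from `x` to `y`, either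
a traversable directed edge of the fourientation `φ`, or an extra arc from `A ∪ B`. -/
def arcStep (src tgt : E → V) (A B : Set (V × V)) (φ : E → Four) (x y : V) : Prop :=
  (∃ a : E × Bool, allows (φ a.1) a.2 ∧ arcTail src tgt a = x ∧ arcHead src tgt a = y)
    ∨ (x, y) ∈ A ∪ B

/-- Reachability by a directed path in the digraph `G⃗(A,B;φ)`. -/
def reach (src tgt : E → V) (A B : Set (V × V)) (φ : E → Four) : V → V → Prop :=
  Relation.ReflTransGen (arcStep src tgt A B φ)

/-- A fourientation `φ` is `(A,B)`-valid: in `G⃗(A,B;φ)`, for every `(u,v) ∈ A` the vertex `v`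
cannot reach `u`, and for every `(u,v) ∈ B` the vertex `v` can reach `u`. -/
def IsValid (src tgt : E → V) (A B : Set (V × V)) (φ : E → Four) : Prop :=
  (∀ p ∈ A, ¬ reach src tgt A B φ p.2 p.1) ∧ (∀ p ∈ B, reach src tgt A B φ p.2 p.1)

/-- The set of solid edges of a fourientation. -/
def solidSet (φ : E → Four) : Set E := {e | IsSolid (φ e)}

/-- The fourientation associated to an orientation `σ : E → Bool` (every edge 1-way). -/
def toFour (σ : E → Bool) : E → Four := fun e => oneWayFour (σ e)

open Classical in
/-- The fourientation associated to a (spanning) subgraph `F ⊆ E`: edges of `F` are 2-way,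
the other edges are 0-way. -/
noncomputable def toFourSub (F : Set E) : E → Four :=
  fun e => if e ∈ F then Four.two else Four.zero

/-- The arc `(e,b)` is the arc of a 1-way edge of `φ`. -/
def oneWayArc (φ : E → Four) (a : E × Bool) : Prop := φ a.1 = oneWayFour a.2

/-- `Cyc(φ)`: the set of cyclic 1-way edges (arcs) of the fourientation `φ`, in the digraph
`G⃗(A,B;φ)`: the head of the arc can reach its tail. -/
def CycSet (src tgt : E → V) (A B : Set (V × V)) (φ : E → Four) : Set (E × Bool) :=
  {a | oneWayArc φ a ∧ reach src tgt A B φ (arcHead src tgt a) (arcTail src tgt a)}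

/-- `Acy(φ)`: the set of acyclic 1-way edges (arcs) of the fourientation `φ`. -/
def AcySet (src tgt : E → V) (A B : Set (V × V)) (φ : E → Four) : Set (E × Bool) :=
  {a | oneWayArc φ a ∧ ¬ reach src tgt A B φ (arcHead src tgt a) (arcTail src tgt a)}

/-- `l` is (the arc sequence of) a directed cycle: a nonempty closed chain of arcs
visiting no vertex twice. -/
def IsDirCycle (src tgt : E → V) (l : List (E × Bool)) : Prop :=
  ∃ h : l ≠ [],
    l.Chain' (fun a b => arcHead src tgt a = arcTail src tgt b) ∧
    arcHead src tgt (l.getLast h) = arcTail src tgt (l.head h) ∧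
    (l.map (arcTail src tgt)).Nodup

/-- Reversing the directed cycle `l` in the fourientation `φ`: all 1-way edges on the cycle are
reversed, other edges (in particular 2-way edges of the cycle) are unchanged. -/
def revCyc [DecidableEq E] (φ : E → Four) (l : List (E × Bool)) : E → Four :=
  fun e => if (e, true) ∈ l ∨ (e, false) ∈ l then flipFour (φ e) else φ e

/-- One cycle-reversal move: `ψ` is obtained from `φ` by reversing a directed cycle of `φ`. -/
def CycleStep (src tgt : E → V) [DecidableEq E] (φ ψ : E → Four) : Prop :=
  ∃ l, IsDirCycle src tgt l ∧ (∀ a ∈ l, allows (φ a.1) a.2) ∧ ψ = revCyc φ l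

/-- The edge `e` crosses the cut given by `V1` (in either direction). -/
def edgeCrosses (src tgt : E → V) (V1 : Set V) (e : E) : Prop :=
  (src e ∈ V1 ∧ tgt e ∉ V1) ∨ (tgt e ∈ V1 ∧ src e ∉ V1)

/-- The cut `V1 / V1ᶜ` defines a directed `(A,B)`-cocycle of `G⃗(A,B;φ)`: the set of arcs from
`V1` to `V1ᶜ` is nonempty, no arc of the digraph goes from `V1ᶜ` to `V1`, and no arc of
`A ∪ B` crosses the cut (in either direction). -/
def IsABCocycleCut (src tgt : E → V) (A B : Set (V × V)) (φ : E → Four) (V1 : Set V) : Prop :=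
  (∃ a : E × Bool, allows (φ a.1) a.2 ∧ arcTail src tgt a ∈ V1 ∧ arcHead src tgt a ∉ V1) ∧
  (∀ a : E × Bool, allows (φ a.1) a.2 → ¬ (arcTail src tgt a ∉ V1 ∧ arcHead src tgt a ∈ V1)) ∧
  (∀ p ∈ A ∪ B, ((p : V × V).1 ∈ V1 ↔ p.2 ∈ V1))

open Classical in
/-- Reversing the directed cocycle given by the cut `V1`: all 1-way edges crossing the cut are
reversed, other edges (in particular 0-way edges crossing the cut) are unchanged. -/
noncomputable def revCut (src tgt : E → V) (φ : E → Four) (V1 : Set V) : E → Four :=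
  fun e => if edgeCrosses src tgt V1 e then flipFour (φ e) else φ e

/-- One cocycle-reversal move: `ψ` is obtained from `φ` by reversing a directed
`(A,B)`-cocycle of `φ`. -/
def CocycleStep (src tgt : E → V) (A B : Set (V × V)) (φ ψ : E → Four) : Prop :=
  ∃ V1 : Set V, IsABCocycleCut src tgt A B φ V1 ∧ ψ = revCut src tgt φ V1

/-- One cycle- or cocycle-reversal move. -/
def CCStep (src tgt : E → V) (A B : Set (V × V)) [DecidableEq E] (φ ψ : E → Four) : Prop :=
  CycleStep src tgt φ ψ ∨ CocycleStep src tgt A B φ ψ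

/-- `φ` contains no cycle (of the graph `G`) made entirely of 2-way edges. -/
def NoTwoWayCycle (src tgt : E → V) (φ : E → Four) : Prop :=
  ¬ ∃ l : List (E × Bool), IsDirCycle src tgt l ∧ (l.map Prod.fst).Nodup ∧
      ∀ a ∈ l, φ a.1 = Four.two

/-- `φ` contains no `(A,B)`-cocycle (of the graph `G`) made entirely of 0-way edges:
there is no cut, not crossed by any arc of `A ∪ B`, crossed by at least one edge of `G`,
all of whose crossing edges are 0-way. -/
def NoZeroWayCocycle (src tgt : E → V) (A B : Set (V × V)) (φ : E → Four) : Prop :=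
  ¬ ∃ V1 : Set V, (∃ e, edgeCrosses src tgt V1 e) ∧
      (∀ e, edgeCrosses src tgt V1 e → φ e = Four.zero) ∧
      (∀ p ∈ A ∪ B, ((p : V × V).1 ∈ V1 ↔ p.2 ∈ V1))

/-- The subgraph `F` contains no cycle (it is a forest). -/
def NoCycleIn (src tgt : E → V) (F : Set E) : Prop :=
  ¬ ∃ l : List (E × Bool), IsDirCycle src tgt l ∧ (l.map Prod.fst).Nodup ∧ ∀ a ∈ l, a.1 ∈ F

/-- One undirected adjacency step in the graph `F ∪ A̲ ∪ B̲`. -/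
def usym (src tgt : E → V) (A B : Set (V × V)) (F : Set E) (x y : V) : Prop :=
  (∃ e ∈ F, (src e = x ∧ tgt e = y) ∨ (src e = y ∧ tgt e = x)) ∨
  (∃ p ∈ A ∪ B, ((p : V × V) = (x, y) ∨ p = (y, x)))

/-- Connectivity (by undirected paths) in the graph `F ∪ A̲ ∪ B̲`. -/
def ureach (src tgt : E → V) (A B : Set (V × V)) (F : Set E) : V → V → Prop :=
  Relation.ReflTransGen (usym src tgt A B F)

/-- The subgraph `F` is `(A,B)`-connected: the connected components of `F ∪ A̲ ∪ B̲`
coincide with those of `G ∪ A̲ ∪ B̲`. -/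
def ABConnected (src tgt : E → V) (A B : Set (V × V)) (F : Set E) : Prop :=
  ∀ x y, ureach src tgt A B F x y ↔ ureach src tgt A B Set.univ x y


/-- The list of arcs `l` contains no 1-way edge having the same orientation in `φ` and `φ'`. -/
def okCycList (φ φ' : E → Four) (l : List (E × Bool)) : Prop :=
  ∀ a ∈ l, ¬ (IsOneWay (φ a.1) ∧ φ a.1 = φ' a.1)

/-- The cut `V1` is crossed by no 1-way edge having the same orientation in `φ` and `φ'`. -/
def okCut (src tgt : E → V) (φ φ' : E → Four) (V1 : Set V) : Prop :=
  ∀ e, edgeCrosses src tgt V1 e → ¬ (IsOneWay (φ e) ∧ φ e = φ' e)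

/-- Cycle-reversal move restricted to directed cycles containing no 1-way edge with the same
orientation in `φ` and `φ'`. -/
def RCycleStep (src tgt : E → V) [DecidableEq E] (φ φ' ψ ψ' : E → Four) : Prop :=
  ∃ l, IsDirCycle src tgt l ∧ (∀ a ∈ l, allows (ψ a.1) a.2) ∧ okCycList φ φ' l ∧
    ψ' = revCyc ψ l

/-- `(A,B)`-cocycle-reversal move restricted to cocycles containing no 1-way edge with the
same orientation in `φ` and `φ'`. -/
def RCocycleStep (src tgt : E → V) (A B : Set (V × V)) (φ φ' ψ ψ' : E → Four) : Prop :=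
  ∃ V1 : Set V, IsABCocycleCut src tgt A B ψ V1 ∧ okCut src tgt φ φ' V1 ∧
    ψ' = revCut src tgt ψ V1


/-!
Cycle reversals flip only 1-way edges lying on directed cycles, cocycle reversals only 1-way
edges lying on directed `(A,B)`-cocycles, and neither changes which edges are cyclic. Hence two
quantities are invariant under both kinds of reversal: the net flow of the cyclic 1-way arcs out
of a vertex set `U` crossed by no 2-way edge, and the signed number of acyclic 1-way arcs
traversed by a closed walk in `G ∪ A̲ ∪ B̲` that avoids 0-way edges.

Let `χ` be equivalent to `φ` and disagree with it on `e`, so that `e` is 1-way in both, with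
opposite orientations. If `e` is cyclic, some directed cycle of `χ` through `e` has all its 1-way
edges disagreeing with `φ`: otherwise the vertices from which the tail of `e` is reached along
2-way edges and such arcs form a set across which `χ` has a larger cyclic flow than `φ`.
Dually, if `e` is acyclic, some directed `(A,B)`-cocycle of `χ` through `e` has all its 1-way
edges disagreeing with `φ`, since otherwise a closed walk would separate the acyclic counts of
`χ` and `φ`. Reversing it fixes `e` and creates no new disagreement, so starting from `φ'` we
reach `φ` without ever reversing an edge on which `φ` and `φ'` agree. With cycle (resp. cocycle)
reversals alone every disagreement is cyclic (resp. acyclic), so reversals of that kind suffice.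
-/

open Relation

section Configurations

@[simp] lemma flipFour_flipFour (c : Four) : flipFour (flipFour c) = c := by cases c <;> rfl

lemma flipFour_oneWayFour (b : Bool) : flipFour (oneWayFour b) = oneWayFour (!b) := by
  cases b <;> rfl

lemma oneWayFour_injective : Function.Injective oneWayFour := by
  intro b c h; cases b <;> cases c <;> simp_all [oneWayFour]

lemma allows_oneWayFour {b c : Bool} : allows (oneWayFour b) c ↔ c = b := by
  cases b <;> cases c <;> simp [oneWayFour, allows]

lemma allows_flipFour {c : Four} {b : Bool} : allows (flipFour c) b ↔ allows c (!b) := by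
  cases c <;> cases b <;> simp [allows, flipFour]

lemma isOneWay_iff {c : Four} : IsOneWay c ↔ ∃ b, c = oneWayFour b := by
  cases c <;> simp [IsOneWay, oneWayFour]

lemma flipFour_eq_self_of_not_isOneWay {c : Four} (h : ¬ IsOneWay c) : flipFour c = c := by
  cases c <;> simp_all [IsOneWay, flipFour]

lemma eq_zero_or_eq_two_or_oneWay (c : Four) :
    c = Four.zero ∨ c = Four.two ∨ ∃ b, c = oneWayFour b := by
  cases c
  exacts [Or.inl rfl, Or.inr (Or.inr ⟨true, rfl⟩), Or.inr (Or.inr ⟨false, rfl⟩),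
    Or.inr (Or.inl rfl)]

lemma oneWayFour_ne_zero (b : Bool) : oneWayFour b ≠ Four.zero := by cases b <;> simp [oneWayFour]

lemma oneWayFour_not_ne (b : Bool) : oneWayFour (!b) ≠ oneWayFour b := by
  cases b <;> simp [oneWayFour]

lemma eq_two_iff_of_orbit {c d : Four} (h : d = c ∨ d = flipFour c) :
    d = Four.two ↔ c = Four.two := by
  rcases h with rfl | rfl
  · rfl
  · cases c <;> decide

lemma eq_zero_iff_of_orbit {c d : Four} (h : d = c ∨ d = flipFour c) :
    d = Four.zero ↔ c = Four.zero := by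
  rcases h with rfl | rfl
  · rfl
  · cases c <;> decide

lemma isOneWay_iff_of_orbit {c d : Four} (h : d = c ∨ d = flipFour c) :
    IsOneWay d ↔ IsOneWay c := by
  rcases h with rfl | rfl
  · rfl
  · cases c <;> simp [IsOneWay, flipFour]

end Configurations

section Arcs

variable {V E : Type*} {src tgt : E → V} {χ : E → Four} {a : E × Bool}

def flipArc (a : E × Bool) : E × Bool := (a.1, !a.2)

@[simp] lemma flipArc_fst (a : E × Bool) : (flipArc a).1 = a.1 := rfl

@[simp] lemma flipArc_flipArc (a : E × Bool) : flipArc (flipArc a) = a := by simp [flipArc]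

@[simp] lemma arcTail_flipArc (a : E × Bool) : arcTail src tgt (flipArc a) = arcHead src tgt a := by
  obtain ⟨e, b⟩ := a; cases b <;> rfl

@[simp] lemma arcHead_flipArc (a : E × Bool) : arcHead src tgt (flipArc a) = arcTail src tgt a := by
  obtain ⟨e, b⟩ := a; cases b <;> rfl

lemma oneWayArc_flipArc :
    oneWayArc χ (flipArc a) ↔ flipFour (χ a.1) = oneWayFour a.2 := by
  unfold oneWayArc flipArc
  constructor <;> intro h
  · rw [h, flipFour_oneWayFour, Bool.not_not]
  · rw [← flipFour_flipFour (χ a.1), h, flipFour_oneWayFour]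

lemma allows_of_oneWayArc (h : oneWayArc χ a) :
    allows (χ a.1) a.2 := by
  rw [h]; exact allows_oneWayFour.2 rfl

lemma oneWayArc_of_allows (hone : IsOneWay (χ a.1)) (ha : allows (χ a.1) a.2) :
    oneWayArc χ a := by
  obtain ⟨b, hb⟩ := isOneWay_iff.1 hone
  have hab : a.2 = b := allows_oneWayFour.1 (hb ▸ ha)
  rw [oneWayArc, hb, hab]

end Arcs

section FlipOn

variable {V E : Type*} {src tgt : E → V}

open Classical in
noncomputable def flipOn (S : Set E) (χ : E → Four) : E → Four :=
  fun e => if e ∈ S then flipFour (χ e) else χ e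

open Classical in
noncomputable def flipArcOn (S : Set E) (a : E × Bool) : E × Bool :=
  if a.1 ∈ S then flipArc a else a

variable {S : Set E} {χ : E → Four}

lemma flipOn_of_mem {e : E} (h : e ∈ S) : flipOn S χ e = flipFour (χ e) := if_pos h

lemma flipOn_of_notMem {e : E} (h : e ∉ S) : flipOn S χ e = χ e := if_neg h

lemma flipArcOn_of_mem {a : E × Bool} (h : a.1 ∈ S) : flipArcOn S a = flipArc a := if_pos h

lemma flipArcOn_of_notMem {a : E × Bool} (h : a.1 ∉ S) : flipArcOn S a = a := if_neg h

lemma flipArcOn_involutive : Function.Involutive (flipArcOn S) := by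
  intro a
  by_cases h : a.1 ∈ S
  · rw [flipArcOn_of_mem h, flipArcOn_of_mem (by simpa using h), flipArc_flipArc]
  · rw [flipArcOn_of_notMem h, flipArcOn_of_notMem h]

lemma oneWayArc_flipOn {a : E × Bool} : oneWayArc (flipOn S χ) a ↔ oneWayArc χ (flipArcOn S a) := by
  by_cases h : a.1 ∈ S
  · rw [flipArcOn_of_mem h, oneWayArc_flipArc, oneWayArc, flipOn_of_mem h]
  · rw [flipArcOn_of_notMem h, oneWayArc, oneWayArc, flipOn_of_notMem h]

lemma allows_flipOn_iff {a : E × Bool} :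
    allows (flipOn S χ a.1) a.2 ↔ allows (χ a.1) (flipArcOn S a).2 := by
  by_cases h : a.1 ∈ S
  · rw [flipOn_of_mem h, flipArcOn_of_mem h, allows_flipFour]; rfl
  · rw [flipOn_of_notMem h, flipArcOn_of_notMem h]

def edgesOf (l : List (E × Bool)) : Set E := {e | (e, true) ∈ l ∨ (e, false) ∈ l}

lemma fst_mem_edgesOf {l : List (E × Bool)} {a : E × Bool} (h : a ∈ l) : a.1 ∈ edgesOf l := by
  obtain ⟨e, b⟩ := a; cases b
  exacts [Or.inr h, Or.inl h]

lemma revCyc_eq_flipOn [DecidableEq E] (l : List (E × Bool)) :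
    revCyc χ l = flipOn (edgesOf l) χ := by
  funext e
  by_cases h : e ∈ edgesOf l
  · exact (if_pos (show (e, true) ∈ l ∨ (e, false) ∈ l from h)).trans (flipOn_of_mem h).symm
  · exact (if_neg (show ¬((e, true) ∈ l ∨ (e, false) ∈ l) from h)).trans
      (flipOn_of_notMem h).symm

lemma revCut_eq_flipOn (U : Set V) :
    revCut src tgt χ U = flipOn {e | edgeCrosses src tgt U e} χ := rfl

lemma flipOn_eq_or (e : E) : flipOn S χ e = χ e ∨ flipOn S χ e = flipFour (χ e) := by
  by_cases h : e ∈ S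
  · exact Or.inr (flipOn_of_mem h)
  · exact Or.inl (flipOn_of_notMem h)

end FlipOn

section Walks

variable {V α : Type*}

def IsWalk (tl hd : α → V) : List α → V → V → Prop
  | [], x, y => x = y
  | a :: l, x, y => tl a = x ∧ IsWalk tl hd l (hd a) y

variable {tl hd : α → V} {r : V → V → Prop} {a : α} {l l₁ l₂ : List α} {x y v : V}

@[simp] lemma isWalk_nil : IsWalk tl hd [] x y ↔ x = y := Iff.rfl

@[simp] lemma isWalk_cons : IsWalk tl hd (a :: l) x y ↔ tl a = x ∧ IsWalk tl hd l (hd a) y :=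
  Iff.rfl

lemma isWalk_append :
    IsWalk tl hd (l₁ ++ l₂) x y ↔ ∃ z, IsWalk tl hd l₁ x z ∧ IsWalk tl hd l₂ z y := by
  induction l₁ generalizing x with
  | nil => simp
  | cons a l ih => simp [ih, and_assoc]

lemma IsWalk.reflTransGen (h : IsWalk tl hd l x y) (hr : ∀ a ∈ l, r (tl a) (hd a)) :
    ReflTransGen r x y := by
  induction l generalizing x with
  | nil => exact h ▸ ReflTransGen.refl
  | cons a l ih =>
    obtain ⟨rfl, hw⟩ := h
    exact .head (hr a (by simp)) (ih hw fun b hb => hr b (by simp [hb]))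

lemma IsWalk.reflTransGen_swap (h : IsWalk tl hd l x y) (hr : ∀ a ∈ l, r (hd a) (tl a)) :
    ReflTransGen r y x := by
  induction l generalizing x with
  | nil => exact h ▸ ReflTransGen.refl
  | cons a l ih =>
    obtain ⟨rfl, hw⟩ := h
    exact .tail (ih hw fun b hb => hr b (by simp [hb])) (hr a (by simp))

lemma IsWalk.split_of_mem (h : IsWalk tl hd l x y) (ha : a ∈ l) :
    ∃ l₁ l₂, l = l₁ ++ a :: l₂ ∧ IsWalk tl hd l₁ x (tl a) ∧ IsWalk tl hd l₂ (hd a) y := by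
  obtain ⟨l₁, l₂, rfl⟩ := List.append_of_mem ha
  obtain ⟨z, h₁, rfl, h₂⟩ := isWalk_append.1 h
  exact ⟨l₁, l₂, rfl, h₁, h₂⟩

lemma IsWalk.reflTransGen_of_mem (h : IsWalk tl hd l v v) (hr : ∀ a ∈ l, r (tl a) (hd a))
    (ha : a ∈ l) : ReflTransGen r (hd a) (tl a) := by
  obtain ⟨l₁, l₂, rfl, h₁, h₂⟩ := h.split_of_mem ha
  exact (h₂.reflTransGen fun b hb => hr b (by simp [hb])).trans
    (h₁.reflTransGen fun b hb => hr b (by simp [hb]))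

lemma IsWalk.reflTransGen_swap_of_mem (h : IsWalk tl hd l v v)
    (hr : ∀ a ∈ l, r (hd a) (tl a)) (ha : a ∈ l) : ReflTransGen r (tl a) (hd a) := by
  obtain ⟨l₁, l₂, rfl, h₁, h₂⟩ := h.split_of_mem ha
  exact (h₁.reflTransGen_swap fun b hb => hr b (by simp [hb])).trans
    (h₂.reflTransGen_swap fun b hb => hr b (by simp [hb]))

lemma IsWalk.sum_map_sub (f : V → ℤ) (h : IsWalk tl hd l x y) :
    (l.map fun a => f (tl a) - f (hd a)).sum = f x - f y := by
  induction l generalizing x with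
  | nil => obtain rfl : x = y := h; simp
  | cons a l ih =>
    obtain ⟨rfl, hw⟩ := h
    simp only [List.map_cons, List.sum_cons, ih hw]
    ring

lemma exists_isWalk_of_reflTransGen {P : α → Prop}
    (hr : ∀ x y, r x y → ∃ a, P a ∧ tl a = x ∧ hd a = y) (h : ReflTransGen r x y) :
    ∃ l, (∀ a ∈ l, P a) ∧ IsWalk tl hd l x y ∧ (l.map tl).Nodup ∧ y ∉ l.map tl := by
  induction h using ReflTransGen.head_induction_on with
  | refl => exact ⟨[], by simp, rfl, by simp, by simp⟩
  | @head x z hxz _ ih =>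
    obtain ⟨l, hP, hw, hnd, hy⟩ := ih
    by_cases hx : x ∈ l.map tl
    · obtain ⟨b, hb, rfl⟩ := List.mem_map.1 hx
      obtain ⟨l₁, l₂, rfl, -, h₂⟩ := hw.split_of_mem hb
      rw [List.map_append] at hnd hy
      refine ⟨b :: l₂, fun c hc => hP c (by simp_all), ⟨rfl, h₂⟩, (List.nodup_append.1 hnd).2.1,
        fun hmem => hy (List.mem_append_right _ hmem)⟩
    · by_cases hxy : x = y
      · exact ⟨[], by simp, hxy, by simp, by simp⟩
      obtain ⟨a, hPa, rfl, rfl⟩ := hr _ _ hxz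
      exact ⟨a :: l, by simp_all, ⟨rfl, hw⟩, List.nodup_cons.2 ⟨hx, hnd⟩,
        by simp [Ne.symm hxy, hy]⟩

lemma isWalk_iff_isChain (hne : l ≠ []) : IsWalk tl hd l x y ↔
    l.IsChain (fun a b => hd a = tl b) ∧ tl (l.head hne) = x ∧ hd (l.getLast hne) = y := by
  induction l generalizing x with
  | nil => exact absurd rfl hne
  | cons a l ih =>
    cases l with
    | nil => simp [eq_comm]
    | cons b l =>
      rw [isWalk_cons, ih (List.cons_ne_nil b l), List.isChain_cons_cons, List.getLast_cons_cons]
      simp only [List.head_cons]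
      constructor
      · rintro ⟨rfl, hc, hab, rfl⟩; exact ⟨⟨hab.symm, hc⟩, rfl, rfl⟩
      · rintro ⟨⟨hab, hc⟩, rfl, rfl⟩; exact ⟨rfl, hc, hab.symm, rfl⟩

end Walks

section Cycles

variable {V E : Type*} {src tgt : E → V} {A B : Set (V × V)} {χ : E → Four}
  {l : List (E × Bool)} {a : E × Bool}

lemma IsDirCycle.exists_isWalk (h : IsDirCycle src tgt l) :
    ∃ v, IsWalk (arcTail src tgt) (arcHead src tgt) l v v := by
  obtain ⟨hne, hc, hclose, -⟩ := h
  exact ⟨_, (isWalk_iff_isChain hne).2 ⟨hc, rfl, hclose⟩⟩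

lemma IsDirCycle.nodup (h : IsDirCycle src tgt l) : l.Nodup := by
  obtain ⟨-, -, -, hnd⟩ := h
  exact hnd.of_map _

lemma isDirCycle_cons (hw : IsWalk (arcTail src tgt) (arcHead src tgt) l
      (arcHead src tgt a) (arcTail src tgt a))
    (hnd : (l.map (arcTail src tgt)).Nodup) (ha : arcTail src tgt a ∉ l.map (arcTail src tgt)) :
    IsDirCycle src tgt (a :: l) := by
  obtain ⟨hc, -, hlast⟩ := (isWalk_iff_isChain (List.cons_ne_nil a l)).1 (⟨rfl, hw⟩ :
    IsWalk (arcTail src tgt) (arcHead src tgt) (a :: l) (arcTail src tgt a) (arcTail src tgt a))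
  exact ⟨List.cons_ne_nil a l, hc, hlast, List.nodup_cons.2 ⟨ha, hnd⟩⟩

lemma exists_mem_of_mem_edgesOf {e : E} (h : e ∈ edgesOf l) : ∃ c ∈ l, c.1 = e := by
  rcases h with h | h
  exacts [⟨_, h, rfl⟩, ⟨_, h, rfl⟩]

lemma reach_of_allows (h : allows (χ a.1) a.2) :
    reach src tgt A B χ (arcTail src tgt a) (arcHead src tgt a) :=
  .single (Or.inl ⟨a, h, rfl, rfl⟩)

lemma reach_of_forall_allows {χ' : E → Four}
    (h : ∀ a, allows (χ' a.1) a.2 → reach src tgt A B χ (arcTail src tgt a) (arcHead src tgt a))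
    {x y : V} (hxy : reach src tgt A B χ' x y) : reach src tgt A B χ x y := by
  induction hxy with
  | refl => exact .refl
  | tail _ hs ih =>
    rcases hs with ⟨a, ha, rfl, rfl⟩ | hab
    exacts [ih.trans (h a ha), ih.tail (Or.inr hab)]

lemma reach_arc_of_reach_of_reach (h₁ : reach src tgt A B χ (arcTail src tgt a) (arcHead src tgt a))
    (h₂ : reach src tgt A B χ (arcHead src tgt a) (arcTail src tgt a)) (b : Bool) :
    reach src tgt A B χ (arcTail src tgt (a.1, b)) (arcHead src tgt (a.1, b)) := by
  by_cases hb : b = a.2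
  · rwa [hb]
  · have : ((a.1, b) : E × Bool) = flipArc a := by
      simp [flipArc, Bool.eq_not.2 hb]
    rwa [this, arcTail_flipArc, arcHead_flipArc]

variable (hl : IsDirCycle src tgt l) (hall : ∀ a ∈ l, allows (χ a.1) a.2)
include hl hall

lemma reach_arc_of_mem_edgesOf (ha : a.1 ∈ edgesOf l) :
    reach src tgt A B χ (arcTail src tgt a) (arcHead src tgt a) := by
  obtain ⟨v, hw⟩ := hl.exists_isWalk
  obtain ⟨c, hc, hce⟩ := exists_mem_of_mem_edgesOf ha
  have hstep : ∀ d ∈ l, arcStep src tgt A B χ (arcTail src tgt d) (arcHead src tgt d) :=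
    fun d hd => Or.inl ⟨d, hall d hd, rfl, rfl⟩
  have := reach_arc_of_reach_of_reach (reach_of_allows (hall c hc))
    (hw.reflTransGen_of_mem hstep hc) a.2
  rwa [hce] at this

lemma reach_flipOn_arc_of_mem_edgesOf (ha : a.1 ∈ edgesOf l) :
    reach src tgt A B (flipOn (edgesOf l) χ) (arcTail src tgt a) (arcHead src tgt a) := by
  obtain ⟨v, hw⟩ := hl.exists_isWalk
  obtain ⟨c, hc, hce⟩ := exists_mem_of_mem_edgesOf ha
  have hflip : ∀ d ∈ l, allows (flipOn (edgesOf l) χ (flipArc d).1) (flipArc d).2 := by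
    intro d hd
    rw [allows_flipOn_iff, flipArcOn_of_mem (by simpa using fst_mem_edgesOf hd), flipArc_flipArc]
    exact hall d hd
  have hstep : ∀ d ∈ l, arcStep src tgt A B (flipOn (edgesOf l) χ)
      (arcHead src tgt d) (arcTail src tgt d) :=
    fun d hd => Or.inl ⟨flipArc d, hflip d hd, by simp, by simp⟩
  have := reach_arc_of_reach_of_reach (hw.reflTransGen_swap_of_mem hstep hc)
    (.single (hstep c hc)) a.2
  rwa [hce] at this

lemma reach_flipOn_edgesOf_iff {x y : V} :
    reach src tgt A B (flipOn (edgesOf l) χ) x y ↔ reach src tgt A B χ x y := by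
  constructor <;> refine reach_of_forall_allows fun a ha => ?_
  · by_cases he : a.1 ∈ edgesOf l
    · exact reach_arc_of_mem_edgesOf hl hall he
    · rw [flipOn_of_notMem he] at ha
      exact reach_of_allows ha
  · by_cases he : a.1 ∈ edgesOf l
    · exact reach_flipOn_arc_of_mem_edgesOf hl hall he
    · exact reach_of_allows (by rwa [flipOn_of_notMem he])

end Cycles

section Cuts

variable {V E : Type*} {src tgt : E → V} {A B : Set (V × V)} {χ : E → Four} {U : Set V}
  {a : E × Bool}

def NoArcInto (src tgt : E → V) (χ : E → Four) (U : Set V) : Prop :=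
  ∀ a : E × Bool, allows (χ a.1) a.2 → arcHead src tgt a ∈ U → arcTail src tgt a ∈ U

lemma IsABCocycleCut.noArcInto (h : IsABCocycleCut src tgt A B χ U) : NoArcInto src tgt χ U :=
  fun a ha hh => by_contra fun ht => h.2.1 a ha ⟨ht, hh⟩

lemma not_edgeCrosses_iff :
    ¬ edgeCrosses src tgt U a.1 ↔ (arcTail src tgt a ∈ U ↔ arcHead src tgt a ∈ U) := by
  obtain ⟨e, b⟩ := a
  cases b <;> simp only [edgeCrosses, arcTail, arcHead] <;> tauto

lemma edgeCrosses_compl {e : E} : edgeCrosses src tgt Uᶜ e ↔ edgeCrosses src tgt U e := by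
  simp only [edgeCrosses, Set.mem_compl_iff]; tauto

lemma NoArcInto.mem_of_crosses (hno : NoArcInto src tgt χ U) (hcr : edgeCrosses src tgt U a.1)
    (ha : allows (χ a.1) a.2) : arcTail src tgt a ∈ U ∧ arcHead src tgt a ∉ U := by
  have := not_edgeCrosses_iff.not_right.1 hcr
  by_cases hh : arcHead src tgt a ∈ U
  · exact absurd (iff_of_true (hno a ha hh) hh) this
  · exact ⟨by tauto, hh⟩

lemma not_edgeCrosses_of_closed {e : E}
    (h₁ : arcHead src tgt (e, true) ∈ U → arcTail src tgt (e, true) ∈ U)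
    (h₂ : arcHead src tgt (e, false) ∈ U → arcTail src tgt (e, false) ∈ U) :
    ¬ edgeCrosses src tgt U e :=
  not_edgeCrosses_iff (a := (e, true)) |>.2 ⟨h₂, h₁⟩

lemma NoArcInto.ne_two (hno : NoArcInto src tgt χ U) {e : E} (hcr : edgeCrosses src tgt U e) :
    χ e ≠ Four.two := by
  intro h2
  have hall : ∀ b, allows (χ e) b := by simp [h2, allows]
  exact not_edgeCrosses_of_closed (hno _ (hall true)) (hno _ (hall false)) hcr

lemma NoArcInto.flipOn_compl (hno : NoArcInto src tgt χ U) :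
    NoArcInto src tgt (flipOn {e | edgeCrosses src tgt U e} χ) Uᶜ := by
  intro a ha hh
  by_cases hcr : edgeCrosses src tgt U a.1
  · rw [allows_flipOn_iff, flipArcOn_of_mem hcr] at ha
    have := hno.mem_of_crosses (a := flipArc a) hcr ha
    simp_all
  · have := not_edgeCrosses_iff.1 hcr
    simp_all

variable (hAB : ∀ p ∈ A ∪ B, (p.1 ∈ U ↔ p.2 ∈ U))
include hAB

lemma NoArcInto.mem_of_reach (hno : NoArcInto src tgt χ U) {x y : V}
    (h : reach src tgt A B χ x y) (hy : y ∈ U) : x ∈ U := by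
  induction h using ReflTransGen.head_induction_on with
  | refl => exact hy
  | head hs _ ih =>
    rcases hs with ⟨a, ha, rfl, rfl⟩ | hab
    exacts [hno a ha ih, (hAB _ hab).2 ih]

lemma NoArcInto.not_reach_of_crosses (hno : NoArcInto src tgt χ U)
    (hcr : edgeCrosses src tgt U a.1) (ha : allows (χ a.1) a.2) :
    ¬ reach src tgt A B χ (arcHead src tgt a) (arcTail src tgt a) := fun hr =>
  (hno.mem_of_crosses hcr ha).2 (hno.mem_of_reach hAB hr (hno.mem_of_crosses hcr ha).1)

/-- A directed path of `G⃗(A,B;χ)` cannot come back into `U` once it has left it. -/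
lemma NoArcInto.reflTransGen_of_reach (hno : NoArcInto src tgt χ U) {x y : V}
    (h : reach src tgt A B χ x y) (hxy : x ∈ U ↔ y ∈ U) :
    ReflTransGen (fun u w => arcStep src tgt A B χ u w ∧ (u ∈ U ↔ w ∈ U)) x y := by
  induction h with
  | refl => exact .refl
  | @tail w y hxw hs ih =>
    have hwy : w ∈ U ↔ y ∈ U := by
      have hin : y ∈ U → w ∈ U := hno.mem_of_reach hAB (.single hs)
      exact ⟨fun hw => by_contra fun hy => hy (hxy.1 (hno.mem_of_reach hAB hxw hw)), hin⟩
    exact (ih (hxy.trans hwy.symm)).tail ⟨hs, hwy⟩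

lemma NoArcInto.reach_flipOn_iff (hno : NoArcInto src tgt χ U) {x y : V}
    (hxy : x ∈ U ↔ y ∈ U) :
    reach src tgt A B (flipOn {e | edgeCrosses src tgt U e} χ) x y ↔ reach src tgt A B χ x y := by
  have hstep : ∀ u w, (u ∈ U ↔ w ∈ U) → (arcStep src tgt A B
      (flipOn {e | edgeCrosses src tgt U e} χ) u w ↔ arcStep src tgt A B χ u w) := by
    rintro u w huw
    refine or_congr_left ⟨?_, ?_⟩ <;> rintro ⟨a, ha, rfl, rfl⟩ <;> refine ⟨a, ?_, rfl, rfl⟩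
    · rwa [flipOn_of_notMem (S := {e | edgeCrosses src tgt U e}) (not_edgeCrosses_iff.2 huw)] at ha
    · rwa [flipOn_of_notMem (S := {e | edgeCrosses src tgt U e}) (not_edgeCrosses_iff.2 huw)]
  constructor
  · intro h
    have hAB' : ∀ p ∈ A ∪ B, (p.1 ∈ Uᶜ ↔ p.2 ∈ Uᶜ) := fun p hp => (hAB p hp).not
    refine ReflTransGen.mono (fun u w huw => ?_) _ _ (hno.flipOn_compl.reflTransGen_of_reach hAB' h
      (by simpa only [Set.mem_compl_iff] using hxy.not))
    exact (hstep u w (by simpa only [Set.mem_compl_iff, not_iff_not] using huw.2)).1 huw.1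
  · intro h
    exact ReflTransGen.mono (fun u w huw => (hstep u w huw.2).2 huw.1) _ _
      (hno.reflTransGen_of_reach hAB h hxy)

end Cuts

section CyclicArcs

variable {V E : Type*} {src tgt : E → V} {A B : Set (V × V)} {χ χ' : E → Four} {S : Set E}
  {l : List (E × Bool)} {U : Set V} {a : E × Bool} {e : E}

lemma mem_cycSet_acySet_flipOn_iff
    (hreach : ∀ a, oneWayArc (flipOn S χ) a →
      (reach src tgt A B (flipOn S χ) (arcHead src tgt a) (arcTail src tgt a) ↔
        reach src tgt A B χ (arcHead src tgt (flipArcOn S a)) (arcTail src tgt (flipArcOn S a))))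
    (a : E × Bool) :
    (a ∈ CycSet src tgt A B (flipOn S χ) ↔ flipArcOn S a ∈ CycSet src tgt A B χ) ∧
      (a ∈ AcySet src tgt A B (flipOn S χ) ↔ flipArcOn S a ∈ AcySet src tgt A B χ) := by
  simp only [CycSet, AcySet, Set.mem_ofPred_eq]
  constructor <;> rw [oneWayArc_flipOn] <;> refine and_congr_right fun h => ?_
  exacts [hreach a (oneWayArc_flipOn.2 h), (hreach a (oneWayArc_flipOn.2 h)).not]

section Cycle

variable (hl : IsDirCycle src tgt l) (hall : ∀ a ∈ l, allows (χ a.1) a.2)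
include hl hall

lemma mem_cycSet_acySet_flipOn_edgesOf_iff (a : E × Bool) :
    (a ∈ CycSet src tgt A B (flipOn (edgesOf l) χ) ↔
        flipArcOn (edgesOf l) a ∈ CycSet src tgt A B χ) ∧
      (a ∈ AcySet src tgt A B (flipOn (edgesOf l) χ) ↔
        flipArcOn (edgesOf l) a ∈ AcySet src tgt A B χ) := by
  refine mem_cycSet_acySet_flipOn_iff (fun a _ => ?_) a
  by_cases he : a.1 ∈ edgesOf l
  · rw [flipArcOn_of_mem he, arcHead_flipArc, arcTail_flipArc]
    refine iff_of_true ?_ (reach_arc_of_mem_edgesOf hl hall he)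
    simpa using reach_flipOn_arc_of_mem_edgesOf (A := A) (B := B) (a := flipArc a) hl hall
      (by simpa using he)
  · rw [flipArcOn_of_notMem he, reach_flipOn_edgesOf_iff hl hall]

lemma notMem_acySet_of_mem_edgesOf (he : a.1 ∈ edgesOf l) : a ∉ AcySet src tgt A B χ := by
  have := reach_arc_of_mem_edgesOf (A := A) (B := B) (a := flipArc a) hl hall (by simpa using he)
  rw [arcTail_flipArc, arcHead_flipArc] at this
  exact fun h => h.2 this

lemma acySet_flipOn_edgesOf : AcySet src tgt A B (flipOn (edgesOf l) χ) = AcySet src tgt A B χ := by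
  ext a
  rw [(mem_cycSet_acySet_flipOn_edgesOf_iff hl hall a).2]
  by_cases he : a.1 ∈ edgesOf l
  · rw [flipArcOn_of_mem he]
    exact iff_of_false (notMem_acySet_of_mem_edgesOf hl hall (by simpa using he))
      (notMem_acySet_of_mem_edgesOf hl hall he)
  · rw [flipArcOn_of_notMem he]

end Cycle

section Cut

variable (hno : NoArcInto src tgt χ U) (hAB : ∀ p ∈ A ∪ B, (p.1 ∈ U ↔ p.2 ∈ U))
include hno hAB

lemma mem_cycSet_acySet_flipOn_crossing_iff (a : E × Bool) :
    (a ∈ CycSet src tgt A B (flipOn {e | edgeCrosses src tgt U e} χ) ↔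
        flipArcOn {e | edgeCrosses src tgt U e} a ∈ CycSet src tgt A B χ) ∧
      (a ∈ AcySet src tgt A B (flipOn {e | edgeCrosses src tgt U e} χ) ↔
        flipArcOn {e | edgeCrosses src tgt U e} a ∈ AcySet src tgt A B χ) := by
  refine mem_cycSet_acySet_flipOn_iff (fun a ha => ?_) a
  by_cases hcr : edgeCrosses src tgt U a.1
  · have hAB' : ∀ p ∈ A ∪ B, (p.1 ∈ Uᶜ ↔ p.2 ∈ Uᶜ) := fun p hp => (hAB p hp).not
    have ha' := allows_of_oneWayArc (oneWayArc_flipOn.1 ha)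
    rw [flipArcOn_of_mem hcr] at ha' ⊢
    exact iff_of_false (hno.flipOn_compl.not_reach_of_crosses hAB' (edgeCrosses_compl.2 hcr)
      (allows_of_oneWayArc ha)) (hno.not_reach_of_crosses hAB hcr ha')
  · rw [flipArcOn_of_notMem hcr]
    exact hno.reach_flipOn_iff hAB (not_edgeCrosses_iff.1 (by simpa using hcr)).symm

lemma notMem_cycSet_of_crosses (hcr : edgeCrosses src tgt U a.1) : a ∉ CycSet src tgt A B χ :=
  fun h => hno.not_reach_of_crosses hAB hcr (allows_of_oneWayArc h.1) h.2

lemma cycSet_flipOn_crossing :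
    CycSet src tgt A B (flipOn {e | edgeCrosses src tgt U e} χ) = CycSet src tgt A B χ := by
  ext a
  rw [(mem_cycSet_acySet_flipOn_crossing_iff hno hAB a).1]
  by_cases hcr : edgeCrosses src tgt U a.1
  · rw [flipArcOn_of_mem hcr]
    exact iff_of_false (notMem_cycSet_of_crosses hno hAB hcr) (notMem_cycSet_of_crosses hno hAB hcr)
  · rw [flipArcOn_of_notMem hcr]

end Cut

def IsCyclicEdge (src tgt : E → V) (A B : Set (V × V)) (χ : E → Four) (e : E) : Prop :=
  ∃ b, (e, b) ∈ CycSet src tgt A B χ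

lemma mem_cycSet_iff : a ∈ CycSet src tgt A B χ ↔ oneWayArc χ a ∧ IsCyclicEdge src tgt A B χ a.1 :=
  ⟨fun h => ⟨h.1, a.2, h⟩, fun ⟨h, b, hb⟩ => by
    obtain rfl : b = a.2 := oneWayFour_injective (hb.1.symm.trans h)
    exact hb⟩

lemma mem_acySet_iff :
    a ∈ AcySet src tgt A B χ ↔ oneWayArc χ a ∧ ¬ IsCyclicEdge src tgt A B χ a.1 :=
  ⟨fun h => ⟨h.1, fun hc => h.2 (mem_cycSet_iff.2 ⟨h.1, hc⟩).2⟩,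
    fun h => ⟨h.1, fun hr => h.2 ⟨a.2, h.1, hr⟩⟩⟩

lemma CocycleStep.not_isCyclicEdge_of_ne (h : CocycleStep src tgt A B χ χ') (he : χ' e ≠ χ e) :
    ¬ IsCyclicEdge src tgt A B χ e := by
  obtain ⟨U, hcut, rfl⟩ := h
  have hcr : edgeCrosses src tgt U e := by_contra fun h => he (if_neg h)
  rintro ⟨b, hb⟩
  exact notMem_cycSet_of_crosses (a := (e, b)) hcut.noArcInto hcut.2.2 hcr hb

end CyclicArcs

section Disagreement

variable {E : Type*} {S : Set E} {χ φ : E → Four}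

lemma exists_oneWayFour_of_ne {e : E} (horb : χ e = φ e ∨ χ e = flipFour (φ e))
    (hne : χ e ≠ φ e) : ∃ c, χ e = oneWayFour c ∧ φ e = oneWayFour (!c) := by
  have h := horb.resolve_left hne
  obtain ⟨b, hb⟩ := isOneWay_iff.1
    (not_not.1 fun h' => hne (h.trans (flipFour_eq_self_of_not_isOneWay h')))
  exact ⟨!b, by rw [h, hb, flipFour_oneWayFour], by rw [hb, Bool.not_not]⟩

variable (hS : ∀ e ∈ S, IsOneWay (χ e) → χ e ≠ φ e)
include hS

lemma ne_of_flipOn_ne {e : E} (he : flipOn S χ e ≠ φ e) : χ e ≠ φ e := by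
  by_cases hmem : e ∈ S
  · by_cases hone : IsOneWay (χ e)
    · exact hS e hmem hone
    · rwa [flipOn_of_mem hmem, flipFour_eq_self_of_not_isOneWay hone] at he
  · rwa [flipOn_of_notMem hmem] at he

lemma card_flipOn_ne_lt [Fintype E] (horb : ∀ e, χ e = φ e ∨ χ e = flipFour (φ e)) {e₀ : E}
    (he₀ : e₀ ∈ S) (hne : χ e₀ ≠ φ e₀) :
    (Finset.univ.filter fun e => flipOn S χ e ≠ φ e).card <
      (Finset.univ.filter fun e => χ e ≠ φ e).card := by
  refine Finset.card_lt_card ⟨fun e he => ?_, fun hsub => ?_⟩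
  · simp only [Finset.mem_filter, Finset.mem_univ, true_and] at he ⊢
    exact ne_of_flipOn_ne hS he
  · have := hsub (Finset.mem_filter.2 ⟨Finset.mem_univ e₀, hne⟩)
    simp only [Finset.mem_filter, Finset.mem_univ, true_and] at this
    rw [flipOn_of_mem he₀, (horb e₀).resolve_left hne, flipFour_flipFour] at this
    exact this rfl

end Disagreement

section History

variable {V E : Type*} [DecidableEq E] {src tgt : E → V} {A B : Set (V × V)}
  {φ χ χ' : E → Four} {a : E × Bool} {e : E}

lemma CCStep.eq_or_eq_flipFour (h : CCStep src tgt A B χ χ') (e : E) :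
    χ' e = χ e ∨ χ' e = flipFour (χ e) := by
  rcases h with ⟨l, -, -, rfl⟩ | ⟨U, -, rfl⟩
  · rw [revCyc_eq_flipOn]; exact flipOn_eq_or e
  · rw [revCut_eq_flipOn]; exact flipOn_eq_or e

lemma CCStep.isCyclicEdge_iff (h : CCStep src tgt A B χ χ') (e : E) :
    IsCyclicEdge src tgt A B χ' e ↔ IsCyclicEdge src tgt A B χ e := by
  rcases h with ⟨l, hl, hall, rfl⟩ | ⟨U, hcut, rfl⟩
  · rw [revCyc_eq_flipOn]
    by_cases he : e ∈ edgesOf l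
    · refine ⟨fun ⟨b, hb⟩ => ⟨!b, ?_⟩, fun ⟨b, hb⟩ => ⟨!b, ?_⟩⟩ <;>
        rw [(mem_cycSet_acySet_flipOn_edgesOf_iff hl hall _).1, flipArcOn_of_mem he] at * <;>
        simpa [flipArc] using hb
    · exact exists_congr fun b => by
        rw [(mem_cycSet_acySet_flipOn_edgesOf_iff hl hall _).1, flipArcOn_of_notMem he]
  · unfold IsCyclicEdge
    rw [revCut_eq_flipOn, cycSet_flipOn_crossing hcut.noArcInto hcut.2.2]

lemma CycleStep.isCyclicEdge_of_ne (h : CycleStep src tgt χ χ') (he : χ' e ≠ χ e) :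
    IsCyclicEdge src tgt A B χ e := by
  obtain ⟨l, hl, hall, rfl⟩ := h
  rw [revCyc_eq_flipOn] at he
  have hmem : e ∈ edgesOf l := by_contra fun h => he (flipOn_of_notMem h)
  rw [flipOn_of_mem hmem] at he
  obtain ⟨b, hb⟩ := isOneWay_iff.1 (not_not.1 (mt flipFour_eq_self_of_not_isOneWay he))
  have := reach_arc_of_mem_edgesOf (A := A) (B := B) (a := flipArc (e, b)) hl hall hmem
  rw [arcTail_flipArc, arcHead_flipArc] at this
  exact ⟨b, hb, this⟩

variable (hist : ReflTransGen (CCStep src tgt A B) φ χ)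
include hist

lemma eq_or_eq_flipFour_of_reflTransGen (e : E) : χ e = φ e ∨ χ e = flipFour (φ e) := by
  induction hist with
  | refl => exact Or.inl rfl
  | tail _ hs ih =>
    rcases hs.eq_or_eq_flipFour e with h | h <;> rcases ih with h' | h' <;> simp [h, h']

lemma isCyclicEdge_iff_of_reflTransGen (e : E) :
    IsCyclicEdge src tgt A B χ e ↔ IsCyclicEdge src tgt A B φ e := by
  induction hist with
  | refl => rfl
  | tail _ hs ih => exact (hs.isCyclicEdge_iff e).trans ih

end History

section Flows

variable {V E : Type*} {src tgt : E → V} {A B : Set (V × V)} {χ : E → Four}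
  {l : List (E × Bool)} {U : Set V} {a : E × Bool} {x y : V}

noncomputable def outflow (U : Set V) (x y : V) : ℤ := U.indicator 1 x - U.indicator 1 y

lemma outflow_eq_zero (h : x ∈ U ↔ y ∈ U) : outflow U x y = 0 := by
  by_cases hx : x ∈ U
  · simp [outflow, hx, h.1 hx]
  · simp [outflow, hx, mt h.2 hx]

lemma outflow_swap : outflow U y x = -outflow U x y := by simp only [outflow]; ring

lemma outflow_eq_one (hx : x ∈ U) (hy : y ∉ U) : outflow U x y = 1 := by simp [outflow, hx, hy]

lemma outflow_nonneg (h : y ∈ U → x ∈ U) : 0 ≤ outflow U x y := by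
  by_cases hx : x ∈ U <;> by_cases hy : y ∈ U <;> simp_all [outflow]

noncomputable def arcOutflow (src tgt : E → V) (U : Set V) (a : E × Bool) : ℤ :=
  outflow U (arcTail src tgt a) (arcHead src tgt a)

lemma arcOutflow_flipArc : arcOutflow src tgt U (flipArc a) = -arcOutflow src tgt U a := by
  rw [arcOutflow, arcTail_flipArc, arcHead_flipArc, outflow_swap, arcOutflow]

open Classical in
noncomputable def cycFlow [Fintype E] (src tgt : E → V) (A B : Set (V × V)) (U : Set V)
    (χ : E → Four) : ℤ :=
  ∑ a : E × Bool, if a ∈ CycSet src tgt A B χ then arcOutflow src tgt U a else 0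

lemma mem_of_oneWayArc_of_mem_edgesOf (hall : ∀ a ∈ l, allows (χ a.1) a.2) (ha : oneWayArc χ a)
    (he : a.1 ∈ edgesOf l) : a ∈ l := by
  obtain ⟨c, hc, hce⟩ := exists_mem_of_mem_edgesOf he
  have := hall c hc
  rw [hce, ha, allows_oneWayFour] at this
  exact Prod.ext hce this ▸ hc

lemma mem_cycSet_of_mem (hl : IsDirCycle src tgt l) (hall : ∀ a ∈ l, allows (χ a.1) a.2)
    (ha : a ∈ l) (hone : IsOneWay (χ a.1)) : a ∈ CycSet src tgt A B χ := by
  obtain ⟨b, hb⟩ := isOneWay_iff.1 hone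
  have hab : a.2 = b := allows_oneWayFour.1 (hb ▸ hall a ha)
  have := reach_arc_of_mem_edgesOf (A := A) (B := B) (a := flipArc a) hl hall
    (by simpa using fst_mem_edgesOf ha)
  rw [arcTail_flipArc, arcHead_flipArc] at this
  exact ⟨by rw [oneWayArc, hb, hab], this⟩

lemma IsDirCycle.sum_arcOutflow [Fintype E] [DecidableEq E] (hl : IsDirCycle src tgt l) :
    ∑ a : E × Bool, (if a ∈ l then arcOutflow src tgt U a else 0) = 0 := by
  obtain ⟨v, hw⟩ := hl.exists_isWalk
  rw [← Finset.sum_filter, show Finset.univ.filter (· ∈ l) = l.toFinset by ext; simp,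
    List.sum_toFinset _ hl.nodup]
  simp only [arcOutflow, outflow]
  rw [hw.sum_map_sub, sub_self]

section Cycle

variable (hl : IsDirCycle src tgt l) (hall : ∀ a ∈ l, allows (χ a.1) a.2)
  (hU : ∀ e, edgeCrosses src tgt U e → χ e ≠ Four.two)
include hl hall hU

lemma mem_cycSet_or_arcOutflow_eq_zero (ha : a ∈ l) :
    a ∈ CycSet src tgt A B χ ∨ arcOutflow src tgt U a = 0 := by
  rcases eq_zero_or_eq_two_or_oneWay (χ a.1) with h | h | ⟨b, hb⟩
  · have := hall a ha
    rw [h] at this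
    exact this.elim
  · exact Or.inr (outflow_eq_zero (not_edgeCrosses_iff.1 fun hcr => hU _ hcr h))
  · exact Or.inl (mem_cycSet_of_mem hl hall ha (isOneWay_iff.2 ⟨b, hb⟩))

open Classical in
lemma ite_mem_cycSet_arcOutflow_flipArcOn (a : E × Bool) :
    (if a ∈ CycSet src tgt A B χ then arcOutflow src tgt U (flipArcOn (edgesOf l) a) else 0) =
      (if a ∈ CycSet src tgt A B χ then arcOutflow src tgt U a else 0) +
        -2 * (if a ∈ l then arcOutflow src tgt U a else 0) := by
  by_cases he : a.1 ∈ edgesOf l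
  · rw [flipArcOn_of_mem he, arcOutflow_flipArc]
    by_cases ha : a ∈ l
    · rcases mem_cycSet_or_arcOutflow_eq_zero (A := A) (B := B) hl hall hU ha with hc | h0
      · simp only [hc, ha, if_true]; ring
      · simp [h0]
    · have hc : a ∉ CycSet src tgt A B χ := fun hc =>
        ha (mem_of_oneWayArc_of_mem_edgesOf hall hc.1 he)
      simp [hc, ha]
  · have ha : a ∉ l := fun ha => he (fst_mem_edgesOf ha)
    simp [flipArcOn_of_notMem he, ha]

/-- The 1-way arcs of a directed cycle have no net flow across a cut crossed by no 2-way edge,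
so reversing them leaves the flow unchanged. -/
lemma cycFlow_flipOn_edgesOf [Fintype E] :
    cycFlow src tgt A B U (flipOn (edgesOf l) χ) = cycFlow src tgt A B U χ := by
  classical
  set τ := flipArcOn (edgesOf l)
  calc cycFlow src tgt A B U (flipOn (edgesOf l) χ)
      = ∑ a, if τ a ∈ CycSet src tgt A B χ then arcOutflow src tgt U (τ (τ a)) else 0 := by
        unfold cycFlow
        refine Finset.sum_congr rfl fun a _ => ?_
        rw [show τ (τ a) = a from flipArcOn_involutive a]
        exact if_congr ((mem_cycSet_acySet_flipOn_edgesOf_iff hl hall a).1) rfl rfl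
    _ = ∑ a, if a ∈ CycSet src tgt A B χ then arcOutflow src tgt U (τ a) else 0 :=
        Equiv.sum_comp (flipArcOn_involutive.toPerm τ)
          fun a => if a ∈ CycSet src tgt A B χ then arcOutflow src tgt U (τ a) else 0
    _ = cycFlow src tgt A B U χ := by
        simp only [τ, ite_mem_cycSet_arcOutflow_flipArcOn hl hall hU, Finset.sum_add_distrib,
          ← Finset.mul_sum, hl.sum_arcOutflow, mul_zero, add_zero]
        rfl

end Cycle

end Flows

section WalkFlows

variable {V E : Type*} {src tgt : E → V} {A B : Set (V × V)} {χ : E → Four}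
  {U : Set V} {a : E × Bool} {v : V}

/-- A step of a walk in `G ∪ A̲ ∪ B̲`: an arc of `G`, or a pair of vertices. -/
abbrev Step (V E : Type*) := (E × Bool) ⊕ (V × V)

def stepTail (src tgt : E → V) : Step V E → V := Sum.elim (arcTail src tgt) Prod.fst

def stepHead (src tgt : E → V) : Step V E → V := Sum.elim (arcHead src tgt) Prod.snd

open Classical in
noncomputable def stepSign (T : Set (E × Bool)) : Step V E → ℤ
  | .inl a => (if a ∈ T then 1 else 0) - (if flipArc a ∈ T then 1 else 0)
  | .inr _ => 0

noncomputable def acyFlow (src tgt : E → V) (A B : Set (V × V)) (χ : E → Four)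
    (W : List (Step V E)) : ℤ :=
  (W.map (stepSign (AcySet src tgt A B χ))).sum

variable (hno : NoArcInto src tgt χ U) (hAB : ∀ p ∈ A ∪ B, (p.1 ∈ U ↔ p.2 ∈ U))
include hno hAB

lemma stepSign_inl_of_crosses (hcr : edgeCrosses src tgt U a.1) (hz : χ a.1 ≠ Four.zero) :
    stepSign (V := V) (AcySet src tgt A B χ) (.inl a) = arcOutflow src tgt U a := by
  classical
  have hacy : ∀ d : E × Bool, edgeCrosses src tgt U d.1 → oneWayArc χ d →
      d ∈ AcySet src tgt A B χ ∧ flipArc d ∉ AcySet src tgt A B χ ∧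
        arcOutflow src tgt U d = 1 := by
    intro d hcr hd
    obtain ⟨ht, hh⟩ := hno.mem_of_crosses hcr (allows_of_oneWayArc hd)
    exact ⟨⟨hd, hno.not_reach_of_crosses hAB hcr (allows_of_oneWayArc hd)⟩,
      fun h => oneWayFour_not_ne d.2 (h.1.symm.trans hd), outflow_eq_one ht hh⟩
  obtain ⟨c, hc⟩ := isOneWay_iff.1 (by
    rcases eq_zero_or_eq_two_or_oneWay (χ a.1) with h | h | h
    exacts [absurd h hz, absurd h (hno.ne_two hcr), isOneWay_iff.2 h])
  by_cases hb : a.2 = c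
  · obtain ⟨h₁, h₂, h₃⟩ := hacy a hcr (by rw [oneWayArc, hc, hb])
    simp [stepSign, h₁, h₂, h₃]
  · obtain ⟨h₁, h₂, h₃⟩ := hacy (flipArc a) (by simpa using hcr)
      (show χ a.1 = oneWayFour (!a.2) by rw [hc, Bool.eq_not.2 (Ne.symm hb)])
    rw [flipArc_flipArc] at h₂
    rw [arcOutflow_flipArc, neg_eq_iff_eq_neg] at h₃
    simp [stepSign, h₁, h₂, h₃]

/-- Reversing a directed cocycle changes the value of each step of a closed walk by twice its
outflow across the cut, and these changes telescope to zero. -/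
lemma acyFlow_flipOn_crossing {W : List (Step V E)}
    (hW : IsWalk (stepTail src tgt) (stepHead src tgt) W v v)
    (hzero : ∀ a, .inl a ∈ W → χ a.1 ≠ Four.zero)
    (hpair : ∀ p, .inr p ∈ W → p ∈ A ∪ B ∨ p.swap ∈ A ∪ B) :
    acyFlow src tgt A B (flipOn {e | edgeCrosses src tgt U e} χ) W = acyFlow src tgt A B χ W := by
  classical
  have hpoint : ∀ s ∈ W, stepSign (AcySet src tgt A B (flipOn {e | edgeCrosses src tgt U e} χ)) s =
      stepSign (AcySet src tgt A B χ) s +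
        -2 * outflow U (stepTail src tgt s) (stepHead src tgt s) := by
    rintro (a | p) hs
    · have hmem := mem_cycSet_acySet_flipOn_crossing_iff (A := A) (B := B) hno hAB
      change _ = _ + -2 * arcOutflow src tgt U a
      simp only [stepSign, (hmem _).2]
      by_cases hcr : edgeCrosses src tgt U a.1
      · rw [flipArcOn_of_mem hcr, flipArcOn_of_mem (by simpa using hcr), flipArc_flipArc,
          ← stepSign_inl_of_crosses hno hAB hcr (hzero a hs)]
        simp only [stepSign]; ring
      · rw [flipArcOn_of_notMem hcr, flipArcOn_of_notMem (by simpa using hcr), arcOutflow,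
          outflow_eq_zero (not_edgeCrosses_iff.1 hcr)]
        ring
    · have : p.1 ∈ U ↔ p.2 ∈ U := (hpair p hs).elim (hAB p) fun h => (hAB _ h).symm
      simp [stepSign, stepTail, stepHead, outflow_eq_zero this]
  unfold acyFlow
  rw [List.map_congr_left hpoint, List.sum_map_add, List.sum_map_mul_left]
  simp only [outflow]
  rw [hW.sum_map_sub, sub_self, mul_zero, add_zero]

end WalkFlows

section Invariants

variable {V E : Type*} [DecidableEq E] {src tgt : E → V} {A B : Set (V × V)} {φ χ : E → Four}

lemma cycFlow_eq_of_reflTransGen [Fintype E] {U : Set V}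
    (hist : ReflTransGen (CCStep src tgt A B) φ χ)
    (hU : ∀ e, edgeCrosses src tgt U e → φ e ≠ Four.two) :
    cycFlow src tgt A B U χ = cycFlow src tgt A B U φ := by
  induction hist with
  | refl => rfl
  | @tail χ₁ χ₂ h₁ hs ih =>
    rw [← ih]
    rcases hs with ⟨l, hl, hall, rfl⟩ | ⟨U', hcut, rfl⟩
    · rw [revCyc_eq_flipOn]
      exact cycFlow_flipOn_edgesOf hl hall fun e hcr h2 =>
        hU e hcr ((eq_two_iff_of_orbit (eq_or_eq_flipFour_of_reflTransGen h₁ e)).1 h2)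
    · unfold cycFlow
      rw [revCut_eq_flipOn, cycSet_flipOn_crossing hcut.noArcInto hcut.2.2]

lemma acyFlow_eq_of_reflTransGen {W : List (Step V E)} {v : V}
    (hist : ReflTransGen (CCStep src tgt A B) φ χ)
    (hW : IsWalk (stepTail src tgt) (stepHead src tgt) W v v)
    (hzero : ∀ a, .inl a ∈ W → φ a.1 ≠ Four.zero)
    (hpair : ∀ p, .inr p ∈ W → p ∈ A ∪ B ∨ p.swap ∈ A ∪ B) :
    acyFlow src tgt A B χ W = acyFlow src tgt A B φ W := by
  induction hist with
  | refl => rfl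
  | @tail χ₁ χ₂ h₁ hs ih =>
    rw [← ih]
    rcases hs with ⟨l, hl, hall, rfl⟩ | ⟨U', hcut, rfl⟩
    · unfold acyFlow
      rw [revCyc_eq_flipOn, acySet_flipOn_edgesOf hl hall]
    · exact acyFlow_flipOn_crossing hcut.noArcInto hcut.2.2 hW (fun a ha h0 =>
        hzero a ha ((eq_zero_iff_of_orbit (eq_or_eq_flipFour_of_reflTransGen h₁ a.1)).1 h0)) hpair

end Invariants

section GoodCycle

variable {V E : Type*} [DecidableEq E] {src tgt : E → V} {A B : Set (V × V)}
  {φ φ' χ : E → Four} {U : Set V} {x y : V}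

variable (hist : ReflTransGen (CCStep src tgt A B) φ χ)
include hist

lemma cycFlow_lt [Fintype E]
    (hgood : ∀ e, χ e ≠ φ e → ∀ b, χ e = oneWayFour b →
      arcHead src tgt (e, b) ∈ U → arcTail src tgt (e, b) ∈ U)
    {e₀ : E} {b₀ : Bool} (hc : χ e₀ = oneWayFour b₀) (hne : χ e₀ ≠ φ e₀)
    (hcyc : IsCyclicEdge src tgt A B χ e₀)
    (hx : arcTail src tgt (e₀, b₀) ∈ U) (hy : arcHead src tgt (e₀, b₀) ∉ U) :
    cycFlow src tgt A B U φ < cycFlow src tgt A B U χ := by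
  classical
  have horb := eq_or_eq_flipFour_of_reflTransGen hist
  have hcy := isCyclicEdge_iff_of_reflTransGen hist
  refine Finset.sum_lt_sum (fun a _ => ?_) ⟨(e₀, b₀), Finset.mem_univ _, ?_⟩
  · by_cases heq : χ a.1 = φ a.1
    · have : a ∈ CycSet src tgt A B χ ↔ a ∈ CycSet src tgt A B φ := by
        rw [mem_cycSet_iff, mem_cycSet_iff, oneWayArc, oneWayArc, heq, hcy]
      exact (if_congr this rfl rfl).ge
    obtain ⟨c, hχ, hφ⟩ := exists_oneWayFour_of_ne (horb a.1) heq
    have hpos : 0 ≤ arcOutflow src tgt U (a.1, c) := outflow_nonneg (hgood a.1 heq c hχ)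
    by_cases hb : a.2 = c
    · have : a ∉ CycSet src tgt A B φ := fun h =>
        oneWayFour_not_ne c (hφ.symm.trans (hb ▸ h.1))
      rw [if_neg this]
      split_ifs
      · rwa [show a = (a.1, c) from Prod.ext rfl hb]
      · rfl
    · have ha : a = flipArc (a.1, c) := Prod.ext rfl (Bool.eq_not.2 hb)
      have : a ∉ CycSet src tgt A B χ := fun h =>
        oneWayFour_not_ne c (by rw [← hχ, h.1, ha]; rfl)
      rw [if_neg this]
      split_ifs
      · rw [ha, arcOutflow_flipArc]; linarith
      · rfl
  · have h₁ : (e₀, b₀) ∈ CycSet src tgt A B χ := mem_cycSet_iff.2 ⟨hc, hcyc⟩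
    obtain ⟨c, hχ, hφ⟩ := exists_oneWayFour_of_ne (horb e₀) hne
    obtain rfl : c = b₀ := oneWayFour_injective (hχ.symm.trans hc)
    have h₂ : (e₀, c) ∉ CycSet src tgt A B φ := fun h => oneWayFour_not_ne c (hφ.symm.trans h.1)
    rw [if_pos h₁, if_neg h₂, arcOutflow, outflow_eq_one hx hy]
    exact one_pos

lemma exists_good_cycle [Fintype E] {e₀ : E} {b₀ : Bool} (hc : χ e₀ = oneWayFour b₀)
    (hne : χ e₀ ≠ φ e₀) (hcyc : IsCyclicEdge src tgt A B χ e₀) :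
    ∃ l, IsDirCycle src tgt l ∧
      (∀ a ∈ l, allows (χ a.1) a.2 ∧ (χ a.1 = Four.two ∨ χ a.1 ≠ φ a.1)) ∧ (e₀, b₀) ∈ l := by
  set good : E × Bool → Prop := fun a => allows (χ a.1) a.2 ∧ (χ a.1 = Four.two ∨ χ a.1 ≠ φ a.1)
  set step : V → V → Prop := fun x y => ∃ a, good a ∧ arcTail src tgt a = x ∧ arcHead src tgt a = y
  have hgood₀ : good (e₀, b₀) := ⟨allows_of_oneWayArc hc, Or.inr hne⟩
  have hpath : ReflTransGen step (arcHead src tgt (e₀, b₀)) (arcTail src tgt (e₀, b₀)) := by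
    by_contra hno
    set U := {v | ReflTransGen step v (arcTail src tgt (e₀, b₀))}
    have hclosed : ∀ a, good a → arcHead src tgt a ∈ U → arcTail src tgt a ∈ U :=
      fun a ha h => .head ⟨a, ha, rfl, rfl⟩ h
    have hU : ∀ e, edgeCrosses src tgt U e → φ e ≠ Four.two := by
      intro e hcr h2
      have h2' := (eq_two_iff_of_orbit (eq_or_eq_flipFour_of_reflTransGen hist e)).2 h2
      have hg : ∀ b, good (e, b) := fun b => ⟨by simp [h2', allows], Or.inl h2'⟩
      exact not_edgeCrosses_of_closed (hclosed _ (hg true)) (hclosed _ (hg false)) hcr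
    exact (cycFlow_lt hist (fun e he b hb => hclosed (e, b) ⟨allows_of_oneWayArc hb, Or.inr he⟩)
      hc hne hcyc .refl hno).ne' (cycFlow_eq_of_reflTransGen hist hU)
  obtain ⟨l, hgood, hw, hnd, hx⟩ := exists_isWalk_of_reflTransGen (fun _ _ h => h) hpath
  exact ⟨(e₀, b₀) :: l, isDirCycle_cons hw hnd hx, List.forall_mem_cons.2 ⟨hgood₀, hgood⟩,
    List.mem_cons_self⟩

lemma exists_rCycleStep [Fintype E] (hsub : ∀ e, χ e ≠ φ e → φ' e ≠ φ e) {e₁ : E}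
    (hne : χ e₁ ≠ φ e₁) (hcyc : IsCyclicEdge src tgt A B χ e₁) :
    ∃ S : Set E, e₁ ∈ S ∧ (∀ e ∈ S, IsOneWay (χ e) → χ e ≠ φ e) ∧
      RCycleStep src tgt φ φ' χ (flipOn S χ) ∧ CycleStep src tgt χ (flipOn S χ) := by
  have horb := eq_or_eq_flipFour_of_reflTransGen hist
  obtain ⟨c, hc, -⟩ := exists_oneWayFour_of_ne (horb e₁) hne
  obtain ⟨l, hl, hgood, hmem⟩ := exists_good_cycle hist hc hne hcyc
  have hall : ∀ a ∈ l, allows (χ a.1) a.2 := fun a ha => (hgood a ha).1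
  have hok : okCycList φ φ' l := by
    rintro a ha ⟨hone, heq⟩
    rcases (hgood a ha).2 with h2 | hne'
    · exact absurd ((isOneWay_iff_of_orbit (horb a.1)).2 hone) (by simp [h2, IsOneWay])
    · exact hsub a.1 hne' heq.symm
  refine ⟨edgesOf l, fst_mem_edgesOf hmem, fun e he hone => ?_,
    ⟨l, hl, hall, hok, (revCyc_eq_flipOn l).symm⟩, ⟨l, hl, hall, (revCyc_eq_flipOn l).symm⟩⟩
  obtain ⟨a, ha, rfl⟩ := exists_mem_of_mem_edgesOf he
  exact (hgood a ha).2.resolve_left fun h2 => by simp [h2, IsOneWay] at hone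

end GoodCycle

section GoodCocycle

variable {V E : Type*} [DecidableEq E] {src tgt : E → V} {A B : Set (V × V)}
  {φ φ' χ : E → Four}

variable (hist : ReflTransGen (CCStep src tgt A B) φ χ)
include hist

lemma stepSign_acySet_le {a : E × Bool}
    (ha : IsOneWay (χ a.1) → oneWayArc χ a ∨ χ a.1 = φ a.1) :
    stepSign (V := V) (AcySet src tgt A B φ) (.inl a) ≤
      stepSign (V := V) (AcySet src tgt A B χ) (.inl a) := by
  classical
  have hcy := isCyclicEdge_iff_of_reflTransGen hist a.1
  by_cases heq : χ a.1 = φ a.1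
  · have hmem : ∀ d : E × Bool, d.1 = a.1 →
        (d ∈ AcySet src tgt A B χ ↔ d ∈ AcySet src tgt A B φ) := by
      rintro d hd
      rw [mem_acySet_iff, mem_acySet_iff, oneWayArc, oneWayArc, hd, heq, hcy]
    simp only [stepSign, hmem a rfl, hmem (flipArc a) rfl, le_refl]
  obtain ⟨c, hχ, hφ⟩ := exists_oneWayFour_of_ne (eq_or_eq_flipFour_of_reflTransGen hist a.1) heq
  have ha' : oneWayArc χ a := (ha (isOneWay_iff.2 ⟨c, hχ⟩)).resolve_right heq
  obtain rfl : a.2 = c := oneWayFour_injective (ha'.symm.trans hχ)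
  have h₁ : flipArc a ∉ AcySet src tgt A B χ := fun h => oneWayFour_not_ne a.2 (h.1.symm.trans ha')
  have h₂ : a ∉ AcySet src tgt A B φ := fun h => oneWayFour_not_ne a.2 (hφ.symm.trans h.1)
  have h₃ : flipArc a ∈ AcySet src tgt A B φ ↔ a ∈ AcySet src tgt A B χ := by
    rw [mem_acySet_iff, mem_acySet_iff, flipArc_fst, hcy]
    exact and_congr_left' (iff_of_true hφ ha')
  simp only [stepSign, if_neg h₁, if_neg h₂, h₃]
  split_ifs <;> norm_num

lemma acyFlow_lt {W : List (Step V E)}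
    (hgood : ∀ a, .inl a ∈ W → IsOneWay (χ a.1) → oneWayArc χ a ∨ χ a.1 = φ a.1)
    {e₀ : E} {b₀ : Bool} (hmem : .inl (e₀, b₀) ∈ W) (hc : χ e₀ = oneWayFour b₀)
    (hne : χ e₀ ≠ φ e₀) (hacy : ¬ IsCyclicEdge src tgt A B χ e₀) :
    acyFlow src tgt A B φ W < acyFlow src tgt A B χ W := by
  classical
  refine List.sum_lt_sum _ _ (fun s hs => ?_) ⟨_, hmem, ?_⟩
  · rcases s with a | p
    · exact stepSign_acySet_le hist (hgood a hs)
    · exact le_rfl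
  · obtain ⟨c, hχ, hφ⟩ := exists_oneWayFour_of_ne (eq_or_eq_flipFour_of_reflTransGen hist e₀) hne
    obtain rfl : c = b₀ := oneWayFour_injective (hχ.symm.trans hc)
    have h₁ : (e₀, c) ∈ AcySet src tgt A B χ := mem_acySet_iff.2 ⟨hc, hacy⟩
    have h₂ : flipArc (e₀, c) ∉ AcySet src tgt A B χ := fun h =>
      oneWayFour_not_ne c (h.1.symm.trans hc)
    have h₃ : (e₀, c) ∉ AcySet src tgt A B φ := fun h => oneWayFour_not_ne c (hφ.symm.trans h.1)
    have h₄ : flipArc (e₀, c) ∈ AcySet src tgt A B φ :=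
      mem_acySet_iff.2 ⟨hφ, (isCyclicEdge_iff_of_reflTransGen hist e₀).not.1 hacy⟩
    simp only [stepSign, if_pos h₁, if_neg h₂, if_neg h₃, if_pos h₄]
    norm_num

lemma exists_good_cocycle {e₀ : E} {b₀ : Bool} (hc : χ e₀ = oneWayFour b₀) (hne : χ e₀ ≠ φ e₀)
    (hacy : ¬ IsCyclicEdge src tgt A B χ e₀) :
    ∃ U : Set V, IsABCocycleCut src tgt A B χ U ∧
      (∀ e, edgeCrosses src tgt U e → IsOneWay (χ e) → χ e ≠ φ e) ∧ edgeCrosses src tgt U e₀ := by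
  have horb := eq_or_eq_flipFour_of_reflTransGen hist
  set good : Step V E → Prop := Sum.elim
    (fun a => χ a.1 ≠ Four.zero ∧ (IsOneWay (χ a.1) → oneWayArc χ a ∨ χ a.1 = φ a.1))
    (fun p => p ∈ A ∪ B ∨ p.swap ∈ A ∪ B)
  set step : V → V → Prop :=
    fun x y => ∃ s, good s ∧ stepTail src tgt s = x ∧ stepHead src tgt s = y
  set U := {v | ReflTransGen step v (arcTail src tgt (e₀, b₀))}
  have hclosed : ∀ s, good s → stepHead src tgt s ∈ U → stepTail src tgt s ∈ U :=
    fun s hs h => .head ⟨s, hs, rfl, rfl⟩ h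
  have hgood₀ : good (.inl (e₀, b₀)) := ⟨hc ▸ oneWayFour_ne_zero b₀, fun _ => Or.inl hc⟩
  have hy : arcHead src tgt (e₀, b₀) ∉ U := by
    intro hy
    obtain ⟨W, hgood, hW, -, -⟩ := exists_isWalk_of_reflTransGen (fun _ _ h => h) hy
    have hW' : IsWalk (stepTail src tgt) (stepHead src tgt) (W ++ [.inl (e₀, b₀)])
        (arcHead src tgt (e₀, b₀)) (arcHead src tgt (e₀, b₀)) :=
      isWalk_append.2 ⟨_, hW, rfl, rfl⟩
    have hgood' : ∀ s ∈ W ++ [.inl (e₀, b₀)], good s := by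
      simpa only [List.forall_mem_append, List.forall_mem_singleton] using ⟨hgood, hgood₀⟩
    refine (acyFlow_lt hist (fun a ha => (hgood' _ ha).2) (by simp) hc hne hacy).ne'
      (acyFlow_eq_of_reflTransGen hist hW' (fun a ha h0 => ?_) fun p hp => hgood' _ hp)
    exact (hgood' _ ha).1 ((eq_zero_iff_of_orbit (horb a.1)).2 h0)
  have hno : NoArcInto src tgt χ U := fun a ha h =>
    hclosed (.inl a) ⟨fun h0 => by rw [h0] at ha; exact ha,
      fun hone => Or.inl (oneWayArc_of_allows hone ha)⟩ h
  have hAB : ∀ p ∈ A ∪ B, (p.1 ∈ U ↔ p.2 ∈ U) := fun p hp =>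
    ⟨hclosed (.inr p.swap) (Or.inr (by simpa using hp)), hclosed (.inr p) (Or.inl hp)⟩
  refine ⟨U, ⟨⟨(e₀, b₀), allows_of_oneWayArc hc, .refl, hy⟩,
    fun a ha h => h.1 (hno a ha h.2), hAB⟩, fun e hcr hone heq => ?_, ?_⟩
  · obtain ⟨b, hb⟩ := isOneWay_iff.1 hone
    have hg : ∀ b', good (.inl (e, b')) :=
      fun _ => ⟨hb ▸ oneWayFour_ne_zero b, fun _ => Or.inr heq⟩
    exact not_edgeCrosses_of_closed (hclosed _ (hg true)) (hclosed _ (hg false)) hcr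
  · by_contra h
    exact hy ((not_edgeCrosses_iff (a := (e₀, b₀))).1 h |>.1 .refl)

lemma exists_rCocycleStep (hsub : ∀ e, χ e ≠ φ e → φ' e ≠ φ e) {e₁ : E} (hne : χ e₁ ≠ φ e₁)
    (hacy : ¬ IsCyclicEdge src tgt A B χ e₁) :
    ∃ S : Set E, e₁ ∈ S ∧ (∀ e ∈ S, IsOneWay (χ e) → χ e ≠ φ e) ∧
      RCocycleStep src tgt A B φ φ' χ (flipOn S χ) ∧ CocycleStep src tgt A B χ (flipOn S χ) := by
  have horb := eq_or_eq_flipFour_of_reflTransGen hist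
  obtain ⟨c, hc, -⟩ := exists_oneWayFour_of_ne (horb e₁) hne
  obtain ⟨U, hcut, hdis, hcr⟩ := exists_good_cocycle hist hc hne hacy
  refine ⟨{e | edgeCrosses src tgt U e}, hcr, hdis, ⟨U, hcut, ?_, rfl⟩, ⟨U, hcut, rfl⟩⟩
  rintro e he ⟨hone, heq⟩
  exact hsub e (hdis e he ((isOneWay_iff_of_orbit (horb e)).2 hone)) heq.symm

end GoodCocycle

section Descent

variable {V E : Type*} {src tgt : E → V} {A B : Set (V × V)} {φ φ' χ : E → Four} {e : E}

lemma of_reflTransGen_of_ne {r : (E → Four) → (E → Four) → Prop} {Q : (E → Four) → Prop}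
    (hinv : ∀ χ χ', r χ χ' → (Q χ' ↔ Q χ)) (hchg : ∀ χ χ', r χ χ' → χ' e ≠ χ e → Q χ)
    (h : ReflTransGen r φ χ) (he : χ e ≠ φ e) : Q χ := by
  induction h with
  | refl => exact absurd rfl he
  | @tail χ₁ χ₂ _ hs ih =>
    refine (hinv _ _ hs).2 ?_
    by_cases h' : χ₂ e = χ₁ e
    · exact ih (h' ▸ he)
    · exact hchg _ _ hs h'

lemma reflTransGen_of_exists_lt {β : Type*} {s : β → β → Prop} (μ : β → ℕ) {P : β → Prop}
    {t : β} (h : ∀ x, P x → x ≠ t → ∃ y, s x y ∧ P y ∧ μ y < μ x) {x : β} (hx : P x) :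
    ReflTransGen s x t := by
  induction hμ : μ x using Nat.strong_induction_on generalizing x with
  | _ n ih =>
    by_cases hxt : x = t
    · exact hxt ▸ .refl
    obtain ⟨y, hs, hy, hlt⟩ := h x hx hxt
    exact .head hs (ih _ (hμ ▸ hlt) hy rfl)

variable [DecidableEq E]

lemma isCyclicEdge_of_reflTransGen_cycleStep (h : ReflTransGen (CycleStep src tgt) φ χ)
    (he : χ e ≠ φ e) : IsCyclicEdge src tgt A B χ e :=
  of_reflTransGen_of_ne (fun _ _ hs => CCStep.isCyclicEdge_iff (Or.inl hs) e)
    (fun _ _ hs => hs.isCyclicEdge_of_ne) h he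

lemma not_isCyclicEdge_of_reflTransGen_cocycleStep
    (h : ReflTransGen (CocycleStep src tgt A B) φ χ) (he : χ e ≠ φ e) :
    ¬ IsCyclicEdge src tgt A B χ e :=
  of_reflTransGen_of_ne (fun _ _ hs => (CCStep.isCyclicEdge_iff (Or.inr hs) e).not)
    (fun _ _ hs => hs.not_isCyclicEdge_of_ne) h he

lemma reflTransGen_of_exists_flipOn [Fintype E] {R R' : (E → Four) → (E → Four) → Prop}
    (hR : ∀ χ χ', R χ χ' → CCStep src tgt A B χ χ')
    (hstep : ∀ χ, ReflTransGen R φ χ → (∀ e, χ e ≠ φ e → φ' e ≠ φ e) → ∀ e, χ e ≠ φ e →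
      ∃ S : Set E, e ∈ S ∧ (∀ e ∈ S, IsOneWay (χ e) → χ e ≠ φ e) ∧
        R' χ (flipOn S χ) ∧ R χ (flipOn S χ))
    (h : ReflTransGen R φ φ') : ReflTransGen R' φ' φ := by
  refine reflTransGen_of_exists_lt (fun χ => (Finset.univ.filter fun e => χ e ≠ φ e).card)
    (P := fun χ => ReflTransGen R φ χ ∧ ∀ e, χ e ≠ φ e → φ' e ≠ φ e)
    (fun χ ⟨hχ, hsub⟩ hne => ?_) ⟨h, fun _ => id⟩
  obtain ⟨e, he⟩ := Function.ne_iff.1 hne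
  obtain ⟨S, heS, hS, hR', hRS⟩ := hstep χ hχ hsub e he
  exact ⟨flipOn S χ, hR', ⟨hχ.tail hRS, fun e' he' => hsub e' (ne_of_flipOn_ne hS he')⟩,
    card_flipOn_ne_lt hS (eq_or_eq_flipFour_of_reflTransGen (ReflTransGen.mono hR _ _ hχ)) heS he⟩

end Descent

theorem statement16_general {V E : Type*} [Fintype E] [DecidableEq E] (src tgt : E → V)
    (A B : Set (V × V)) (φ φ' : E → Four) :
    (Relation.ReflTransGen (CycleStep src tgt) φ φ' →
      Relation.ReflTransGen (RCycleStep src tgt φ φ') φ' φ) ∧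
    (Relation.ReflTransGen (CocycleStep src tgt A B) φ φ' →
      Relation.ReflTransGen (RCocycleStep src tgt A B φ φ') φ' φ) ∧
    (Relation.ReflTransGen (CCStep src tgt A B) φ φ' →
      Relation.ReflTransGen
        (fun ψ ψ' => RCycleStep src tgt φ φ' ψ ψ' ∨ RCocycleStep src tgt A B φ φ' ψ ψ')
        φ' φ) := by
  refine ⟨reflTransGen_of_exists_flipOn (A := A) (B := B) (fun _ _ => Or.inl) ?_,
    reflTransGen_of_exists_flipOn (fun _ _ => Or.inr) ?_,
    reflTransGen_of_exists_flipOn (fun _ _ => id) ?_⟩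
  · intro χ hχ hsub e he
    exact exists_rCycleStep (A := A) (B := B) (ReflTransGen.mono (fun _ _ => Or.inl) _ _ hχ) hsub he
      (isCyclicEdge_of_reflTransGen_cycleStep hχ he)
  · intro χ hχ hsub e he
    exact exists_rCocycleStep (ReflTransGen.mono (fun _ _ => Or.inr) _ _ hχ) hsub he
      (not_isCyclicEdge_of_reflTransGen_cocycleStep hχ he)
  · intro χ hχ hsub e he
    by_cases hcyc : IsCyclicEdge src tgt A B χ e
    · obtain ⟨S, h₁, h₂, h₃, h₄⟩ := exists_rCycleStep hχ hsub he hcyc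
      exact ⟨S, h₁, h₂, Or.inl h₃, Or.inl h₄⟩
    · obtain ⟨S, h₁, h₂, h₃, h₄⟩ := exists_rCocycleStep hχ hsub he hcyc
      exact ⟨S, h₁, h₂, Or.inr h₃, Or.inr h₄⟩

/-- If two fourientations `φ, φ'` of `G` are cycle (resp. cocycle,
cycle-cocycle) equivalent, then `φ` can be obtained from `φ'` by repeatedly reversing
directed cycles (resp. directed `(A,B)`-cocycles, directed cycles or `(A,B)`-cocycles),
none of which contains a 1-way edge having the same orientation in `φ` and `φ'`. -/
theorem statement16 {V E : Type*} [Fintype V] [Fintype E] [DecidableEq E] (src tgt : E → V)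
    (A B : Set (V × V)) (φ φ' : E → Four) :
    (Relation.ReflTransGen (CycleStep src tgt) φ φ' →
      Relation.ReflTransGen (RCycleStep src tgt φ φ') φ' φ) ∧
    (Relation.ReflTransGen (CocycleStep src tgt A B) φ φ' →
      Relation.ReflTransGen (RCocycleStep src tgt A B φ φ') φ' φ) ∧
    (Relation.ReflTransGen (CCStep src tgt A B) φ φ' →
      Relation.ReflTransGen
        (fun ψ ψ' => RCycleStep src tgt φ φ' ψ ψ' ∨ RCocycleStep src tgt A B φ φ' ψ ψ')
        φ' φ) :=
  statement16_general src tgt A B φ φ'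

end SubgraphsVsOrientations
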